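/- Let π be a permutation of length n of the form π = (n-2) α (n-1) n, with exactly three left-to-right maxima n-2, n-1, n. Then B⁻¹(Av(π)) = Av((n-2)(n-1)αn, (n-1)(n-2)αn, (n-2)nα(n-1), n(n-2)α(n-1)). -/

import Mathlib

/-- One pass of bubble sort. -/
def bubble : List ℕ → List ℕ
  | [] => []
  | [a] => [a]
  | a :: b :: t => if a < b then a :: bubble (b :: t) else b :: bubble (a :: t)

/-- Two lists of the same length are order-isomorphic. -/
def OrdIso (a b : List ℕ) : Prop :=
  a.length = b.length ∧
    ∀ i j, i < a.length → j < a.length → (a[i]! < a[j]! ↔ b[i]! < b[j]!)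

/-- `τ` contains the pattern `π`: some subsequence of `τ` is order-isomorphic to `π`. -/
def PContains (π τ : List ℕ) : Prop := ∃ s : List ℕ, s.Sublist τ ∧ OrdIso π s

/-- `τ` avoids the pattern `π`. -/
def Avoids (τ π : List ℕ) : Prop := ¬ PContains π τ

/-- `σ` is (the word of) a permutation of `{1, …, n}`. -/
def IsPermList (σ : List ℕ) : Prop := σ.Perm (List.range' 1 σ.length)

set_option linter.unusedVariables false

namespace BubblePre
open List

open List

theorem bubble_perm : ∀ l : List ℕ, (bubble l).Perm l
  | [] => by rw [bubble]
  | [a] => by rw [bubble]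
  | a :: b :: t => by
    rw [bubble]
    split
    · exact (bubble_perm (b :: t)).cons a
    · exact ((bubble_perm (a :: t)).cons b).trans (Perm.swap a b t)
  termination_by l => l.length

/-- `x` occurs (strictly) before `y` in `l`. -/
def Bef (l : List ℕ) (x y : ℕ) : Prop :=
  x ∈ l ∧ y ∈ l ∧ l.idxOf x < l.idxOf y

theorem Bef.memx {l : List ℕ} {x y : ℕ} (h : Bef l x y) : x ∈ l := h.1
theorem Bef.memy {l : List ℕ} {x y : ℕ} (h : Bef l x y) : y ∈ l := h.2.1

theorem Bef.ne {l : List ℕ} {x y : ℕ} (h : Bef l x y) : x ≠ y := by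
  rintro rfl; exact lt_irrefl _ h.2.2

theorem bef_trans {l : List ℕ} {x y z : ℕ} (h : Bef l x y) (h' : Bef l y z) : Bef l x z :=
  ⟨h.1, h'.2.1, h.2.2.trans h'.2.2⟩

theorem bef_asymm {l : List ℕ} {x y : ℕ} (h : Bef l x y) : ¬ Bef l y x := by
  intro h'; exact lt_irrefl _ (h.2.2.trans h'.2.2)

theorem bef_total {l : List ℕ} {x y : ℕ} (hx : x ∈ l) (hy : y ∈ l) (hne : x ≠ y) :
    Bef l x y ∨ Bef l y x := by
  have hix := List.idxOf_lt_length_iff.2 hx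
  have hiy := List.idxOf_lt_length_iff.2 hy
  rcases lt_trichotomy (l.idxOf x) (l.idxOf y) with h|h|h
  · exact Or.inl ⟨hx, hy, h⟩
  · exfalso; apply hne
    have e1 : l[l.idxOf x] = x := List.getElem_idxOf hix
    have e2 : l[l.idxOf y] = y := List.getElem_idxOf hiy
    rw [← e1, ← e2]; congr 1
  · exact Or.inr ⟨hy, hx, h⟩

theorem bef_cons {a : ℕ} {m : List ℕ} (h : a ∉ m) {x y : ℕ} :
    Bef (a :: m) x y ↔ (x = a ∧ y ∈ m) ∨ Bef m x y := by
  constructor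
  · rintro ⟨hx, hy, hlt⟩
    rcases eq_or_ne x a with rfl|hxa
    · refine Or.inl ⟨rfl, ?_⟩
      rcases mem_cons.1 hy with rfl|h'
      · simp [List.idxOf_cons_self] at hlt
      · exact h'
    · right
      rcases mem_cons.1 hx with rfl|hxm
      · exact absurd rfl hxa
      have hya : y ≠ a := by
        rintro rfl
        rw [List.idxOf_cons_self, List.idxOf_cons_ne _ (Ne.symm hxa)] at hlt
        omega
      rcases mem_cons.1 hy with rfl|hym
      · exact absurd rfl hya
      rw [List.idxOf_cons_ne _ (Ne.symm hxa), List.idxOf_cons_ne _ (Ne.symm hya)] at hlt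
      exact ⟨hxm, hym, by omega⟩
  · rintro (⟨rfl, hy⟩|⟨hx, hy, hlt⟩)
    · have hya : y ≠ x := fun hh => h (hh ▸ hy)
      refine ⟨by simp, mem_cons_of_mem _ hy, ?_⟩
      rw [List.idxOf_cons_self, List.idxOf_cons_ne _ (Ne.symm hya)]
      omega
    · have hxa : x ≠ a := fun hh => h (hh ▸ hx)
      have hya : y ≠ a := fun hh => h (hh ▸ hy)
      refine ⟨mem_cons_of_mem _ hx, mem_cons_of_mem _ hy, ?_⟩
      rw [List.idxOf_cons_ne _ (Ne.symm hxa), List.idxOf_cons_ne _ (Ne.symm hya)]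
      omega

theorem bef_head {a : ℕ} {m : List ℕ} (h : a ∉ m) {y : ℕ} (hy : y ∈ m) : Bef (a :: m) a y :=
  (bef_cons h).2 (Or.inl ⟨rfl, hy⟩)

theorem bef_not_head {a : ℕ} {m : List ℕ} (h : a ∉ m) (x : ℕ) : ¬ Bef (a :: m) x a := by
  rw [bef_cons h]
  rintro (⟨_, hmem⟩|hb)
  · exact h hmem
  · exact h hb.memy

theorem bef_cons_of_mem {a : ℕ} {m : List ℕ} (h : a ∉ m) {x y : ℕ} (hx : x ∈ m) :
    Bef (a :: m) x y ↔ Bef m x y := by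
  rw [bef_cons h]
  constructor
  · rintro (⟨rfl, _⟩|hb)
    · exact absurd hx h
    · exact hb
  · exact Or.inr

/-- `x` jumps over `y` during the bubble pass. -/
def Flip (l : List ℕ) (x y : ℕ) : Prop :=
  y < x ∧ Bef l x y ∧ ∀ z, Bef l z y → z ≤ x

section helpers
variable {a b : ℕ} {t : List ℕ}

theorem flipF1 (ha : a ∉ b :: t) (hb : b ∉ t) (hlt : a < b) {y : ℕ} (hy : y ∈ b :: t) : ¬ Flip (a :: b :: t) a y := by
  rintro ⟨hyl, -, hall⟩
  rcases mem_cons.1 hy with rfl|hyt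
  · omega
  · have hby : Bef (a :: b :: t) b y := (bef_cons ha).2 (Or.inr (bef_head hb hyt))
    have := hall b hby
    omega

theorem flipF2 (ha : a ∉ b :: t) (hb : b ∉ t) (hlt : a < b) {x y : ℕ} (hx : x ∈ b :: t) (hy : y ∈ b :: t) :
    Flip (a :: b :: t) x y ↔ Flip (b :: t) x y := by
  constructor
  · rintro ⟨h1, h2, h3⟩
    exact ⟨h1, (bef_cons_of_mem ha hx).1 h2, fun z hz => h3 z ((bef_cons ha).2 (Or.inr hz))⟩
  · rintro ⟨h1, h2, h3⟩
    refine ⟨h1, (bef_cons_of_mem ha hx).2 h2, fun z hz => ?_⟩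
    rcases (bef_cons ha).1 hz with ⟨rfl, -⟩|hz'
    · rcases mem_cons.1 hy with rfl|hyt
      · omega
      · have := h3 b (bef_head hb hyt); omega
    · exact h3 z hz'

theorem flipG1 (ha : a ∉ b :: t) (hb : b ∉ t) (hba : b < a) : Flip (a :: b :: t) a b := by
  refine ⟨hba, bef_head ha (mem_cons_self), fun z hz => ?_⟩
  rcases (bef_cons ha).1 hz with ⟨rfl, -⟩|hz'
  · exact le_refl _
  · exact absurd hz' (bef_not_head hb z)

theorem flipG2 (ha : a ∉ b :: t) (hba : b < a) {y : ℕ} (hy : y ∈ t) : ¬ Flip (a :: b :: t) b y := by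
  rintro ⟨-, -, hall⟩
  have := hall a (bef_head ha (mem_cons_of_mem _ hy))
  omega

theorem bef_mid (ha : a ∉ b :: t) (hb : b ∉ t) (hat : a ∉ t) (hab : a ≠ b) {x y : ℕ} (hx : x ∈ a :: t) (hy : y ∈ a :: t) :
    Bef (a :: b :: t) x y ↔ Bef (a :: t) x y := by
  rw [bef_cons ha, bef_cons hat]
  constructor
  · rintro (⟨rfl, hyb⟩|hbt)
    · left
      refine ⟨rfl, ?_⟩
      rcases mem_cons.1 hyb with rfl|hyt
      · rcases mem_cons.1 hy with h|h
        · exact absurd h.symm hab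
        · exact absurd h hb
      · exact hyt
    · right
      have hxm : x ∈ b :: t := hbt.memx
      have hxt : x ∈ t := by
        rcases mem_cons.1 hxm with rfl|h
        · rcases mem_cons.1 hx with h'|h'
          · exact absurd h'.symm hab
          · exact h'
        · exact h
      exact (bef_cons_of_mem hb hxt).1 hbt
  · rintro (⟨rfl, hyt⟩|htt)
    · exact Or.inl ⟨rfl, mem_cons_of_mem _ hyt⟩
    · exact Or.inr ((bef_cons hb).2 (Or.inr htt))

theorem flipG3 (ha : a ∉ b :: t) (hb : b ∉ t) (hat : a ∉ t) (hab : a ≠ b) (hba : b < a) {x y : ℕ}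
    (hx : x ∈ a :: t) (hy : y ∈ a :: t) :
    Flip (a :: b :: t) x y ↔ Flip (a :: t) x y := by
  constructor
  · rintro ⟨h1, h2, h3⟩
    refine ⟨h1, (bef_mid ha hb hat hab hx hy).1 h2, fun z hz => ?_⟩
    exact h3 z ((bef_mid ha hb hat hab hz.memx hy).2 hz)
  · rintro ⟨h1, h2, h3⟩
    have hyt : y ∈ t := by
      rcases mem_cons.1 h2.memy with rfl|h
      · exact absurd h2 (bef_not_head hat x)
      · exact h
    have hax : a ≤ x := h3 a (bef_head hat hyt)
    refine ⟨h1, (bef_mid ha hb hat hab hx hy).2 h2, fun z hz => ?_⟩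
    rcases (bef_cons ha).1 hz with ⟨rfl, -⟩|hz'
    · exact hax
    · rcases (bef_cons hb).1 hz' with ⟨rfl, -⟩|hz''
      · omega
      · exact h3 z ((bef_cons hat).2 (Or.inr hz''))

end helpers

theorem master : ∀ (l : List ℕ), l.Nodup → ∀ x y, x ∈ l → y ∈ l → x ≠ y →
    (Bef (bubble l) x y ↔ (Bef l x y ∧ ¬ Flip l x y) ∨ (Bef l y x ∧ Flip l y x))
  | [] => by intro _ x y hx _ _; simp at hx
  | [a] => by
      intro _ x y hx hy hne
      rw [mem_singleton] at hx hy
      exact absurd (hx.trans hy.symm) hne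
  | a :: b :: t => by
      intro hnd x y hx hy hne
      have ha : a ∉ b :: t := (nodup_cons.1 hnd).1
      have hnd' : (b :: t).Nodup := (nodup_cons.1 hnd).2
      have hb : b ∉ t := (nodup_cons.1 hnd').1
      have hndt : t.Nodup := (nodup_cons.1 hnd').2
      have hat : a ∉ t := fun h => ha (mem_cons_of_mem _ h)
      have hab : a ≠ b := fun h => ha (h ▸ mem_cons_self)
      have hndat : (a :: t).Nodup := nodup_cons.2 ⟨hat, hndt⟩
      rw [bubble]
      by_cases hlt : a < b
      · rw [if_pos hlt]
        have habub : a ∉ bubble (b :: t) := fun h => ha ((bubble_perm (b :: t)).mem_iff.1 h)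
        rcases eq_or_ne x a with rfl|hxa
        · have hy' : y ∈ b :: t := by
            rcases mem_cons.1 hy with rfl|h
            · exact absurd rfl hne
            · exact h
          refine iff_of_true (bef_head habub ((bubble_perm (b :: t)).mem_iff.2 hy'))
            (Or.inl ⟨bef_head ha hy', flipF1 ha hb hlt hy'⟩)
        · rcases eq_or_ne y a with rfl|hya
          · have hx' : x ∈ b :: t := by
              rcases mem_cons.1 hx with rfl|h
              · exact absurd rfl hxa
              · exact h
            refine iff_of_false (bef_not_head habub x) ?_
            rintro (⟨hbef, -⟩|⟨-, hflip⟩)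
            · exact bef_not_head ha x hbef
            · exact flipF1 ha hb hlt hx' hflip
          · have hx' : x ∈ b :: t := by
              rcases mem_cons.1 hx with rfl|h; · exact absurd rfl hxa
              · exact h
            have hy' : y ∈ b :: t := by
              rcases mem_cons.1 hy with rfl|h; · exact absurd rfl hya
              · exact h
            rw [bef_cons_of_mem habub ((bubble_perm (b :: t)).mem_iff.2 hx'),
              master (b :: t) hnd' x y hx' hy' hne]
            exact or_congr
              (and_congr (bef_cons_of_mem ha hx').symm (not_congr (flipF2 ha hb hlt hx' hy').symm))
              (and_congr (bef_cons_of_mem ha hy').symm (flipF2 ha hb hlt hy' hx').symm)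
      · rw [if_neg hlt]
        have hba : b < a := by omega
        have hbat : b ∉ a :: t := by
          intro h
          rcases mem_cons.1 h with h'|h'
          · exact hab h'.symm
          · exact hb h'
        have hbbub : b ∉ bubble (a :: t) := fun h => hbat ((bubble_perm (a :: t)).mem_iff.1 h)
        have hmem' : ∀ z, z ∈ a :: b :: t → z ≠ b → z ∈ a :: t := by
          intro z hz hzb
          rcases mem_cons.1 hz with rfl|h
          · simp
          · rcases mem_cons.1 h with rfl|h2
            · exact absurd rfl hzb
            · exact mem_cons_of_mem _ h2
        rcases eq_or_ne x b with heq|hxb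
        · subst heq
          have hy' : y ∈ a :: t := hmem' y hy (Ne.symm hne)
          refine iff_of_true (bef_head hbbub ((bubble_perm (a :: t)).mem_iff.2 hy')) ?_
          rcases mem_cons.1 hy' with rfl|hyt
          · exact Or.inr ⟨bef_head ha (by simp), flipG1 ha hb hba⟩
          · exact Or.inl ⟨(bef_cons ha).2 (Or.inr (bef_head hb hyt)), flipG2 ha hba hyt⟩
        · rcases eq_or_ne y b with heq|hyb
          · subst heq
            have hx' : x ∈ a :: t := hmem' x hx hxb
            refine iff_of_false (bef_not_head hbbub x) ?_
            rintro (⟨hbef, hnf⟩|⟨hbef', hfl⟩)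
            · rcases mem_cons.1 hx' with rfl|hxt
              · exact hnf (flipG1 ha hb hba)
              · have hbt2 : Bef (y :: t) x y := by
                  rcases (bef_cons ha).1 hbef with ⟨rfl, -⟩|hh
                  · exact absurd hxt hat
                  · exact hh
                exact bef_not_head hb x hbt2
            · rcases mem_cons.1 hx' with rfl|hxt
              · exact bef_not_head ha y hbef'
              · exact flipG2 ha hba hxt hfl
          · have hx' : x ∈ a :: t := hmem' x hx hxb
            have hy' : y ∈ a :: t := hmem' y hy hyb
            rw [bef_cons_of_mem hbbub ((bubble_perm (a :: t)).mem_iff.2 hx'),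
              master (a :: t) hndat x y hx' hy' hne]
            exact or_congr
              (and_congr (bef_mid ha hb hat hab hx' hy').symm
                (not_congr (flipG3 ha hb hat hab hba hx' hy').symm))
              (and_congr (bef_mid ha hb hat hab hy' hx').symm
                (flipG3 ha hb hat hab hba hy' hx').symm)
  termination_by l => l.length
  decreasing_by all_goals (simp; try omega)
theorem pairwise_bef_self (l : List ℕ) (hnd : l.Nodup) : l.Pairwise (Bef l) := by
  rw [List.pairwise_iff_getElem]
  intro i j hi hj hij
  refine ⟨List.getElem_mem hi, List.getElem_mem hj, ?_⟩
  rw [List.Nodup.idxOf_getElem hnd i hi, List.Nodup.idxOf_getElem hnd j hj]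
  exact hij

theorem pairwise_bef_of_sublist {τ s : List ℕ} (hnd : τ.Nodup) (hs : s.Sublist τ) :
    s.Pairwise (Bef τ) :=
  List.Pairwise.sublist hs (pairwise_bef_self τ hnd)

theorem sublist_of_pairwise_bef {τ e : List ℕ} (hnd : τ.Nodup) (hp : e.Pairwise (Bef τ))
    (hmem : ∀ x ∈ e, x ∈ τ) : e.Sublist τ := by
  classical
  set is : List (Fin τ.length) :=
    e.attach.map (fun x => (⟨τ.idxOf x.1, List.idxOf_lt_length_iff.2 (hmem x.1 x.2)⟩ :
      Fin τ.length)) with his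
  have h1 : is.Pairwise (· < ·) := by
    rw [his, List.pairwise_map]
    have hp' : e.attach.Pairwise (fun a b => Bef τ a.1 b.1) := by
      rw [← List.pairwise_map (f := Subtype.val)]
      rw [List.attach_map_subtype_val]
      exact hp
    refine hp'.imp ?_
    intro a b hab
    exact hab.2.2
  have h2 := List.map_getElem_sublist h1
  have h3 : List.map (fun x => τ[x]) is = e := by
    rw [his, List.map_map]
    conv_rhs => rw [← List.attach_map_subtype_val e]
    apply List.map_congr_left
    intro x hx
    simp only [Function.comp_apply]
    exact List.getElem_idxOf _
  rwa [h3] at h2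

theorem pairwise_getLast {R : ℕ → ℕ → Prop} : ∀ {l : List ℕ} (hR : l.Pairwise R) (hl : l ≠ []),
    ∀ z ∈ l, z = l.getLast hl ∨ R z (l.getLast hl)
  | [], _, hl => absurd rfl hl
  | [x], _, _ => by intro z hz; rw [List.mem_singleton] at hz; subst hz; left; rfl
  | x :: y :: t, hR, _ => by
    intro z hz
    have hR' := (List.pairwise_cons.1 hR).2
    have hx := (List.pairwise_cons.1 hR).1
    rw [List.getLast_cons (by simp : y :: t ≠ [])]
    rcases List.mem_cons.1 hz with rfl|hz'
    · exact Or.inr (hx _ (List.getLast_mem _))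
    · exact pairwise_getLast hR' (by simp) z hz'

theorem mem_take_indexOf {l : List ℕ} {x : ℕ} (hx : x ∈ l) :
    x ∈ l.take (l.idxOf x + 1) := by
  have h1 : l.idxOf x < l.length := List.idxOf_lt_length_iff.2 hx
  have h2 : l.idxOf x < (l.take (l.idxOf x + 1)).length := by
    rw [List.length_take]; omega
  have : (l.take (l.idxOf x + 1))[l.idxOf x] = x := by
    rw [List.getElem_take]; exact List.getElem_idxOf h1
  exact List.mem_iff_getElem.2 ⟨_, h2, this⟩

theorem mem_take_of_bef {l : List ℕ} {x y : ℕ} (h : Bef l x y) :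
    x ∈ l.take (l.idxOf y + 1) := by
  obtain ⟨hx, hy, hlt⟩ := h
  have h1 : l.idxOf x < l.length := List.idxOf_lt_length_iff.2 hx
  have h2 : l.idxOf x < (l.take (l.idxOf y + 1)).length := by
    rw [List.length_take]
    have := List.idxOf_lt_length_iff.2 hy
    omega
  have : (l.take (l.idxOf y + 1))[l.idxOf x] = x := by
    rw [List.getElem_take]; exact List.getElem_idxOf h1
  exact List.mem_iff_getElem.2 ⟨_, h2, this⟩

theorem bef_or_eq_of_mem_take {l : List ℕ} (hnd : l.Nodup) {x y : ℕ} (hy : y ∈ l)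
    (hx : x ∈ l.take (l.idxOf y + 1)) : x = y ∨ Bef l x y := by
  obtain ⟨i, hi, hxe⟩ := List.mem_iff_getElem.1 hx
  have hil : i < l.length := by
    have := List.length_take (i := l.idxOf y + 1) (l := l)
    omega
  have hie : l[i] = x := by rw [← List.getElem_take (xs := l) (h := hi), hxe]
  have hidx : l.idxOf x = i := by rw [← hie]; exact List.Nodup.idxOf_getElem hnd i hil
  have hiy : i ≤ l.idxOf y := by
    have := List.length_take (i := l.idxOf y + 1) (l := l)
    have := List.idxOf_lt_length_iff.2 hy
    omega
  rcases eq_or_lt_of_le hiy with heq|hlt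
  · left
    have h5 := List.getElem_idxOf (List.idxOf_lt_length_iff.2 hy)
    subst heq
    exact hie.symm.trans h5
  · right
    exact ⟨List.mem_of_mem_take hx, hy, by omega⟩


open List

theorem bang_eq_of_opt_eq {l l' : List ℕ} {i j : ℕ} (h : l[i]? = l'[j]?) : l[i]! = l'[j]! := by
  rcases hc : l'[j]? with _|v
  · rw [hc] at h
    rw [getElem!_neg l i, getElem!_neg l' j]
    · intro h'
      rw [List.getElem?_eq_getElem h'] at hc
      cases hc
    · intro h'
      rw [List.getElem?_eq_getElem h'] at h
      cases h
  · rw [hc] at h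
    rw [List.getElem!_of_getElem? h, List.getElem!_of_getElem? hc]

theorem bang_mid (P B Q : List ℕ) {i : ℕ} (h : i < B.length) :
    (P ++ B ++ Q)[P.length + i]! = B[i]! := by
  apply bang_eq_of_opt_eq
  rw [List.getElem?_append, if_pos (by simp; omega), List.getElem?_append_right (by omega)]
  congr 1
  omega

theorem bang_outer (P B Q : List ℕ) {j : ℕ} (h : j < P.length + Q.length) :
    (P ++ B ++ Q)[if j < P.length then j else j + B.length]! = (P ++ Q)[j]! := by
  apply bang_eq_of_opt_eq
  by_cases hj : j < P.length
  · rw [if_pos hj, List.getElem?_append, if_pos (by simp; omega), List.getElem?_append,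
      if_pos hj, List.getElem?_append, if_pos hj]
  · rw [if_neg hj, List.getElem?_append_right (by simp; omega),
      List.getElem?_append_right (by omega)]
    have : j + B.length - (P ++ B).length = j - P.length := by simp; omega
    rw [this]

theorem ordIso_glue {B S P P' Q Q' : List ℕ}
    (hb : B.length = S.length) (hp : P.length = P'.length) (hq : Q.length = Q'.length) :
    OrdIso (P ++ B ++ Q) (P' ++ S ++ Q') ↔
      (OrdIso B S ∧ OrdIso (P ++ Q) (P' ++ Q') ∧
        ∀ i, i < B.length → ∀ j, j < P.length + Q.length →
          (B[i]! < (P ++ Q)[j]! ↔ S[i]! < (P' ++ Q')[j]!) ∧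
          ((P ++ Q)[j]! < B[i]! ↔ (P' ++ Q')[j]! < S[i]!)) := by
  have hmid' : ∀ i (_ : i < S.length), (P' ++ S ++ Q')[P.length + i]! = S[i]! := by
    intro i hi
    have := bang_mid P' S Q' hi
    rwa [← hp] at this
  have hout' : ∀ j (_ : j < P.length + Q.length),
      (P' ++ S ++ Q')[if j < P.length then j else j + B.length]! = (P' ++ Q')[j]! := by
    intro j hj
    have := bang_outer P' S Q' (j := j) (by omega)
    rwa [← hp, ← hb] at this
  have hNlen : (P ++ B ++ Q).length = P.length + B.length + Q.length := by
    rw [List.length_append, List.length_append]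
  constructor
  · rintro ⟨hN, hcmp⟩
    refine ⟨⟨hb, ?_⟩, ⟨by simp [hp, hq], ?_⟩, ?_⟩
    · intro i j hi hj
      have := hcmp (P.length + i) (P.length + j) (by omega) (by omega)
      rwa [bang_mid P B Q hi, bang_mid P B Q hj, hmid' i (by omega), hmid' j (by omega)] at this
    · intro i j hi hj
      simp only [length_append] at hi hj
      have := hcmp (if i < P.length then i else i + B.length)
        (if j < P.length then j else j + B.length)
        (by split <;> omega) (by split <;> omega)
      rwa [bang_outer P B Q hi, bang_outer P B Q hj, hout' i hi, hout' j hj] at this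
    · intro i hi j hj
      constructor
      · have := hcmp (P.length + i) (if j < P.length then j else j + B.length)
          (by omega) (by split <;> omega)
        rwa [bang_mid P B Q hi, bang_outer P B Q hj, hmid' i (by omega), hout' j hj] at this
      · have := hcmp (if j < P.length then j else j + B.length) (P.length + i)
          (by split <;> omega) (by omega)
        rwa [bang_mid P B Q hi, bang_outer P B Q hj, hmid' i (by omega), hout' j hj] at this
  · rintro ⟨⟨-, hmid⟩, ⟨-, hout⟩, hcross⟩
    refine ⟨by simp [hb, hp, hq], ?_⟩
    intro i j hi hj
    rw [hNlen] at hi hj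
    have hclass : ∀ m, m < P.length + B.length + Q.length →
        (∃ i₀, i₀ < B.length ∧ m = P.length + i₀) ∨
        (∃ j₀, j₀ < P.length + Q.length ∧ m = if j₀ < P.length then j₀ else j₀ + B.length) := by
      intro m hm
      by_cases h1 : m < P.length
      · exact Or.inr ⟨m, by omega, by rw [if_pos h1]⟩
      · by_cases h2 : m < P.length + B.length
        · exact Or.inl ⟨m - P.length, by omega, by omega⟩
        · refine Or.inr ⟨m - B.length, by omega, ?_⟩
          rw [if_neg (by omega)]
          omega
    rcases hclass i hi with ⟨i₀, hi₀, rfl⟩|⟨i₀, hi₀, rfl⟩ <;>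
      rcases hclass j hj with ⟨j₀, hj₀, rfl⟩|⟨j₀, hj₀, rfl⟩
    · rw [bang_mid P B Q hi₀, bang_mid P B Q hj₀, hmid' i₀ (by omega), hmid' j₀ (by omega)]
      exact hmid i₀ j₀ (by omega) (by omega)
    · rw [bang_mid P B Q hi₀, bang_outer P B Q hj₀, hmid' i₀ (by omega), hout' j₀ hj₀]
      exact (hcross i₀ hi₀ j₀ hj₀).1
    · rw [bang_mid P B Q hj₀, bang_outer P B Q hi₀, hmid' j₀ (by omega), hout' i₀ hi₀]
      exact (hcross j₀ hj₀ i₀ hi₀).2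
    · rw [bang_outer P B Q hi₀, bang_outer P B Q hj₀, hout' i₀ hi₀, hout' j₀ hj₀]
      exact hout i₀ j₀ (by simpa using hi₀) (by simpa using hj₀)

theorem ordIso_three {p q r x y z : ℕ} :
    OrdIso [p, q, r] [x, y, z] ↔
      ((p < q ↔ x < y) ∧ (q < p ↔ y < x) ∧ (p < r ↔ x < z) ∧ (r < p ↔ z < x) ∧
        (q < r ↔ y < z) ∧ (r < q ↔ z < y)) := by
  constructor
  · rintro ⟨-, h⟩
    refine ⟨?_, ?_, ?_, ?_, ?_, ?_⟩
    · have := h 0 1 (by simp) (by simp); simpa using this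
    · have := h 1 0 (by simp) (by simp); simpa using this
    · have := h 0 2 (by simp) (by simp); simpa using this
    · have := h 2 0 (by simp) (by simp); simpa using this
    · have := h 1 2 (by simp) (by simp); simpa using this
    · have := h 2 1 (by simp) (by simp); simpa using this
  · rintro ⟨h1, h2, h3, h4, h5, h6⟩
    refine ⟨rfl, ?_⟩
    intro i j hi hj
    simp only [length_cons, length_nil] at hi hj
    interval_cases i <;> interval_cases j <;> simp <;> omega

/-- The configuration in `σ` equivalent to `bubble σ` containing `π`. -/
def Config (σ β : List ℕ) : Prop :=
  ∃ x₁ x₂ y sl, (x₁ :: x₂ :: sl ++ [y]).Pairwise (Bef σ) ∧ OrdIso β sl ∧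
    (∀ z ∈ sl, z < x₁ ∧ z < x₂ ∧ z < y) ∧ x₁ ≠ x₂ ∧ min x₁ x₂ < y ∧ y ≠ x₁ ∧ y ≠ x₂

/-- Positional form of an occurrence of `π = w₁ β [w₂, w₃]`. -/
def OccA (τ β : List ℕ) : Prop :=
  ∃ a b c sl, (a :: sl ++ [b, c]).Pairwise (Bef τ) ∧ OrdIso β sl ∧
    (∀ z ∈ sl, z < a) ∧ a < b ∧ b < c

theorem exists_two_concat (r : List ℕ) (h : 2 ≤ r.length) : ∃ sl b c, r = sl ++ [b, c] := by
  rcases hr : r.reverse with _|⟨c, rest⟩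
  · have : r = [] := by simpa using congrArg List.reverse hr
    subst this; simp at h
  · rcases rest with _|⟨b, sl'⟩
    · have : r = [c] := by simpa using congrArg List.reverse hr
      subst this; simp at h
    · refine ⟨sl'.reverse, b, c, ?_⟩
      have := congrArg List.reverse hr
      simpa using this

theorem ordIso_shapeA {β sl : List ℕ} {w₁ w₂ w₃ a b c : ℕ}
    (hβ : ∀ z ∈ β, z < w₁) (h12 : w₁ < w₂) (h23 : w₂ < w₃) (hlen : β.length = sl.length) :
    OrdIso (w₁ :: β ++ [w₂, w₃]) (a :: sl ++ [b, c]) ↔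
      (OrdIso β sl ∧ (∀ z ∈ sl, z < a) ∧ a < b ∧ b < c) := by
  have hglue := ordIso_glue (B := β) (S := sl) (P := [w₁]) (P' := [a])
    (Q := [w₂, w₃]) (Q' := [b, c]) hlen rfl rfl
  constructor
  · intro H
    obtain ⟨Hmid, Houter, Hcross⟩ := hglue.1 H
    have h3 := ordIso_three.1 Houter
    refine ⟨Hmid, ?_, h3.1.1 h12, h3.2.2.2.2.1.1 h23⟩
    intro z hz
    obtain ⟨i, hi, rfl⟩ := List.mem_iff_getElem.1 hz
    have hc := (Hcross i (by omega) 0 (by simp)).1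
    rw [getElem!_pos β i (by omega), getElem!_pos sl i hi] at hc
    simp only [List.singleton_append, List.getElem!_cons_zero] at hc
    exact hc.1 (hβ _ (List.getElem_mem (by omega)))
  · rintro ⟨Hmid, hza, hab, hbc⟩
    apply hglue.2
    refine ⟨Hmid, ordIso_three.2 ⟨by omega, by omega, by omega, by omega, by omega, by omega⟩, ?_⟩
    intro i hi j hj
    have hβi : β[i]! = β[i] := getElem!_pos β i (by omega)
    have hsi : sl[i]! = sl[i] := getElem!_pos sl i (by omega)
    have hm1 : β[i] < w₁ := hβ _ (List.getElem_mem (by omega))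
    have hm2 : sl[i] < a := hza _ (List.getElem_mem (by omega))
    simp only [List.length_singleton, List.length_cons, List.length_nil] at hj
    interval_cases j <;>
      simp only [List.singleton_append, List.getElem!_cons_zero, List.getElem!_cons_succ,
        hβi, hsi] <;>
      constructor <;> omega

theorem ordIso_shapeB {β sl : List ℕ} {w₁ w₂ w₃ x₁ x₂ y : ℕ}
    (hβ : ∀ z ∈ β, z < w₁ ∧ z < w₂ ∧ z < w₃) (hlen : β.length = sl.length) :
    OrdIso (w₁ :: w₂ :: β ++ [w₃]) (x₁ :: x₂ :: sl ++ [y]) ↔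
      (OrdIso β sl ∧ (∀ z ∈ sl, z < x₁ ∧ z < x₂ ∧ z < y) ∧
        (x₁ < x₂ ↔ w₁ < w₂) ∧ (x₂ < x₁ ↔ w₂ < w₁) ∧ (x₁ < y ↔ w₁ < w₃) ∧
        (y < x₁ ↔ w₃ < w₁) ∧ (x₂ < y ↔ w₂ < w₃) ∧ (y < x₂ ↔ w₃ < w₂)) := by
  have hglue := ordIso_glue (B := β) (S := sl) (P := [w₁, w₂]) (P' := [x₁, x₂])
    (Q := [w₃]) (Q' := [y]) hlen rfl rfl
  constructor
  · intro H
    obtain ⟨Hmid, Houter, Hcross⟩ := hglue.1 H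
    have h3 := ordIso_three.1 Houter
    refine ⟨Hmid, ?_, h3.1.symm, h3.2.1.symm, h3.2.2.1.symm, h3.2.2.2.1.symm,
      h3.2.2.2.2.1.symm, h3.2.2.2.2.2.symm⟩
    intro z hz
    obtain ⟨i, hi, rfl⟩ := List.mem_iff_getElem.1 hz
    have hm : β[i] < w₁ ∧ β[i] < w₂ ∧ β[i] < w₃ := hβ _ (List.getElem_mem (by omega))
    have hβi : β[i]! = β[i] := getElem!_pos β i (by omega)
    have hsi : sl[i]! = sl[i] := getElem!_pos sl i hi
    have hc0 := (Hcross i (by omega) 0 (by simp)).1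
    have hc1 := (Hcross i (by omega) 1 (by simp)).1
    have hc2 := (Hcross i (by omega) 2 (by simp)).1
    simp only [List.cons_append, List.singleton_append, List.getElem!_cons_zero,
      List.getElem!_cons_succ, hβi, hsi] at hc0 hc1 hc2
    exact ⟨hc0.1 hm.1, hc1.1 hm.2.1, hc2.1 hm.2.2⟩
  · rintro ⟨Hmid, hz, e1, e2, e3, e4, e5, e6⟩
    apply hglue.2
    refine ⟨Hmid, ordIso_three.2 ⟨e1.symm, e2.symm, e3.symm, e4.symm, e5.symm, e6.symm⟩, ?_⟩
    intro i hi j hj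
    have hβi : β[i]! = β[i] := getElem!_pos β i (by omega)
    have hsi : sl[i]! = sl[i] := getElem!_pos sl i (by omega)
    have hm : β[i] < w₁ ∧ β[i] < w₂ ∧ β[i] < w₃ := hβ _ (List.getElem_mem (by omega))
    have hm' : sl[i] < x₁ ∧ sl[i] < x₂ ∧ sl[i] < y := hz _ (List.getElem_mem (by omega))
    simp only [List.length_cons, List.length_singleton, List.length_nil] at hj
    interval_cases j <;>
      simp only [List.cons_append, List.singleton_append, List.nil_append,
        List.getElem!_cons_zero, List.getElem!_cons_succ, hβi, hsi] <;>
      constructor <;> omega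

theorem pcontains_shapeA_iff {τ β : List ℕ} {w₁ w₂ w₃ : ℕ} (hnd : τ.Nodup)
    (hβ : ∀ z ∈ β, z < w₁) (h12 : w₁ < w₂) (h23 : w₂ < w₃) :
    PContains (w₁ :: β ++ [w₂, w₃]) τ ↔ OccA τ β := by
  constructor
  · rintro ⟨s, hsub, hiso⟩
    have hslen : s.length = β.length + 3 := by
      have := hiso.1; simp at this; omega
    rcases s with _|⟨a, r⟩
    · simp at hslen
    · have hrlen : r.length = β.length + 2 := by simpa using hslen
      obtain ⟨sl, b, c, rfl⟩ := exists_two_concat r (by omega)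
      have hsllen : β.length = sl.length := by
        have := hrlen; simp at this; omega
      obtain ⟨Hmid, hza, hab, hbc⟩ := (ordIso_shapeA hβ h12 h23 hsllen).1 hiso
      exact ⟨a, b, c, sl, pairwise_bef_of_sublist hnd hsub, Hmid, hza, hab, hbc⟩
  · rintro ⟨a, b, c, sl, hp, Hmid, hza, hab, hbc⟩
    have hmem : ∀ x ∈ a :: sl ++ [b, c], x ∈ τ := by
      have h1 := (List.pairwise_cons.1 hp).1
      intro x hx
      rcases List.mem_cons.1 hx with rfl|hx'
      · exact (h1 b (by simp)).memx
      · exact (h1 x hx').memy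
    refine ⟨a :: sl ++ [b, c], sublist_of_pairwise_bef hnd hp hmem, ?_⟩
    exact (ordIso_shapeA hβ h12 h23 Hmid.1).2 ⟨Hmid, hza, hab, hbc⟩

theorem pcontains_shapeB_iff {τ β : List ℕ} {w₁ w₂ w₃ : ℕ} (hnd : τ.Nodup)
    (hβ : ∀ z ∈ β, z < w₁ ∧ z < w₂ ∧ z < w₃) :
    PContains (w₁ :: w₂ :: β ++ [w₃]) τ ↔
      ∃ x₁ x₂ y sl, (x₁ :: x₂ :: sl ++ [y]).Pairwise (Bef τ) ∧ OrdIso β sl ∧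
        (∀ z ∈ sl, z < x₁ ∧ z < x₂ ∧ z < y) ∧
        (x₁ < x₂ ↔ w₁ < w₂) ∧ (x₂ < x₁ ↔ w₂ < w₁) ∧ (x₁ < y ↔ w₁ < w₃) ∧
        (y < x₁ ↔ w₃ < w₁) ∧ (x₂ < y ↔ w₂ < w₃) ∧ (y < x₂ ↔ w₃ < w₂) := by
  constructor
  · rintro ⟨s, hsub, hiso⟩
    have hslen : s.length = β.length + 3 := by
      have := hiso.1; simp at this; omega
    rcases s with _|⟨x₁, s'⟩
    · simp at hslen
    rcases s' with _|⟨x₂, r⟩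
    · simp at hslen
    have hrlen : r.length = β.length + 1 := by simpa using hslen
    obtain ⟨sl, y, hre⟩ : ∃ sl y, r = sl ++ [y] := by
      rcases List.eq_nil_or_concat r with h|⟨L, d, h⟩
      · rw [h] at hrlen; simp at hrlen
      · exact ⟨L, d, by simpa using h⟩
    subst hre
    have hsllen : β.length = sl.length := by
      have : sl.length + 1 = β.length + 1 := by simpa using hrlen
      omega
    obtain ⟨Hmid, hz, e⟩ := (ordIso_shapeB hβ hsllen).1 hiso
    exact ⟨x₁, x₂, y, sl, pairwise_bef_of_sublist hnd hsub, Hmid, hz, e⟩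
  · rintro ⟨x₁, x₂, y, sl, hp, Hmid, hz, e1, e2, e3, e4, e5, e6⟩
    have h1 := (List.pairwise_cons.1 hp).1
    have h2 := (List.pairwise_cons.1 (List.pairwise_cons.1 hp).2).1
    have hmem : ∀ x ∈ x₁ :: x₂ :: sl ++ [y], x ∈ τ := by
      intro x hx
      rcases List.mem_cons.1 hx with rfl|hx'
      · exact (h1 x₂ (by simp)).memx
      · exact (h1 x hx').memy
    refine ⟨x₁ :: x₂ :: sl ++ [y], sublist_of_pairwise_bef hnd hp hmem, ?_⟩
    exact (ordIso_shapeB hβ Hmid.1).2 ⟨Hmid, hz, e1, e2, e3, e4, e5, e6⟩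

theorem pairwise_buildB {σ : List ℕ} {x₁ x₂ y : ℕ} {sl : List ℕ}
    (h12 : Bef σ x₁ x₂) (h1s : ∀ z ∈ sl, Bef σ x₁ z) (h1y : Bef σ x₁ y)
    (h2s : ∀ z ∈ sl, Bef σ x₂ z) (h2y : Bef σ x₂ y)
    (hss : sl.Pairwise (Bef σ)) (hsy : ∀ z ∈ sl, Bef σ z y) :
    (x₁ :: x₂ :: sl ++ [y]).Pairwise (Bef σ) := by
  refine List.pairwise_cons.2 ⟨?_, List.pairwise_cons.2 ⟨?_,
    List.pairwise_append.2 ⟨hss, List.pairwise_singleton _ _, ?_⟩⟩⟩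
  · intro z hz
    rcases List.mem_cons.1 hz with rfl|hz'
    · exact h12
    rcases List.mem_append.1 hz' with h|h
    · exact h1s z h
    · rw [List.mem_singleton.1 h]; exact h1y
  · intro z hz
    rcases List.mem_append.1 hz with h|h
    · exact h2s z h
    · rw [List.mem_singleton.1 h]; exact h2y
  · intro z hz u hu
    rw [List.mem_singleton.1 hu]
    exact hsy z hz

theorem pairwise_buildA {τ : List ℕ} {a b c : ℕ} {sl : List ℕ}
    (has : ∀ z ∈ sl, Bef τ a z) (hab : Bef τ a b) (hac : Bef τ a c)
    (hsb : ∀ z ∈ sl, Bef τ z b) (hsc : ∀ z ∈ sl, Bef τ z c) (hbc : Bef τ b c)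
    (hss : sl.Pairwise (Bef τ)) :
    (a :: sl ++ [b, c]).Pairwise (Bef τ) := by
  refine List.pairwise_cons.2 ⟨?_, List.pairwise_append.2 ⟨hss, ?_, ?_⟩⟩
  · intro z hz
    rcases List.mem_append.1 hz with h|h
    · exact has z h
    rcases List.mem_cons.1 h with rfl|h'
    · exact hab
    · rw [List.mem_singleton.1 h']; exact hac
  · exact List.pairwise_cons.2 ⟨fun z hz => by rw [List.mem_singleton.1 hz]; exact hbc,
      List.pairwise_singleton _ _⟩
  · intro z hz u hu
    rcases List.mem_cons.1 hu with rfl|h'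
    · exact hsb z hz
    · rw [List.mem_singleton.1 h']; exact hsc z hz

theorem core_forward {σ β : List ℕ} (hnd : σ.Nodup) (h : OccA (bubble σ) β) : Config σ β := by
  obtain ⟨a, b, c, sl, hp, Hmid, hza, hab, hbc⟩ := h
  have hmemσ : ∀ x ∈ bubble σ, x ∈ σ := fun x hx => (bubble_perm σ).subset hx
  -- extract pairwise pieces
  have h_a := (List.pairwise_cons.1 hp).1
  have hp' := (List.pairwise_cons.1 hp).2
  have hslp : sl.Pairwise (Bef (bubble σ)) := (List.pairwise_append.1 hp').1
  have hbcp : Bef (bubble σ) b c := by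
    have := (List.pairwise_append.1 hp').2.1
    exact (List.pairwise_cons.1 this).1 c (by simp)
  have hcross := (List.pairwise_append.1 hp').2.2
  have h_ab : Bef (bubble σ) a b := h_a b (by simp)
  have h_ac : Bef (bubble σ) a c := h_a c (by simp)
  -- memberships in σ
  have maσ : a ∈ σ := hmemσ a h_ab.memx
  have mbσ : b ∈ σ := hmemσ b h_ab.memy
  have mcσ : c ∈ σ := hmemσ c h_ac.memy
  have mzσ : ∀ z ∈ sl, z ∈ σ := fun z hz => hmemσ z (h_a z (List.mem_append_left _ hz)).memy
  -- step 1 : a is before every element of sl in σ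
  have step1 : ∀ z ∈ sl, Bef σ a z := by
    intro z hz
    have hzlt := hza z hz
    rcases (master σ hnd a z maσ (mzσ z hz) (by omega)).1
      (h_a z (List.mem_append_left _ hz)) with ⟨h, -⟩|⟨-, hf⟩
    · exact h
    · exact absurd hf.1 (by omega)
  -- step 2 : sl is in the same order in σ
  have step2 : sl.Pairwise (Bef σ) := by
    refine hslp.imp_of_mem ?_
    intro z1 z2 hz1 hz2 hb12
    rcases (master σ hnd z1 z2 (mzσ z1 hz1) (mzσ z2 hz2) hb12.ne).1 hb12 with ⟨h, -⟩|⟨-, hf⟩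
    · exact h
    · exfalso
      have := hf.2.2 a (step1 z1 hz1)
      have := hza z2 hz2
      omega
  rcases List.eq_nil_or_concat sl with rfl|⟨q, e, hsl⟩
  · -- sl = [] : occurrence a b c
    rcases (master σ hnd a b maσ mbσ (by omega)).1 h_ab with ⟨hab2, -⟩|⟨hba, hfb⟩
    · rcases (master σ hnd a c maσ mcσ (by omega)).1 h_ac with ⟨hac2, -⟩|⟨hca, hfc⟩
      · rcases bef_total mbσ mcσ (by omega) with hbc2|hcb2
        · exact ⟨a, b, c, [], pairwise_buildB hab2 (by simp) hac2 (by simp) hbc2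
            (List.Pairwise.nil) (by simp), Hmid, by simp, by omega, by omega, by omega, by omega⟩
        · exact ⟨a, c, b, [], pairwise_buildB hac2 (by simp) hab2 (by simp) hcb2
            (List.Pairwise.nil) (by simp), Hmid, by simp, by omega, by omega, by omega, by omega⟩
      · -- c before a in σ
        have hac3 := hfc.1
        exact ⟨c, a, b, [], pairwise_buildB hca (by simp) (bef_trans hca hab2) (by simp) hab2
          (List.Pairwise.nil) (by simp), Hmid, by simp, by omega, by omega, by omega, by omega⟩
    · -- b before a in σ
      rcases (master σ hnd a c maσ mcσ (by omega)).1 h_ac with ⟨hac2, -⟩|⟨hca, hfc⟩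
      · exact ⟨b, a, c, [], pairwise_buildB hba (by simp) (bef_trans hba hac2) (by simp) hac2
          (List.Pairwise.nil) (by simp), Hmid, by simp, by omega, by omega, by omega, by omega⟩
      · -- both flips: impossible
        exfalso
        have := hfb.2.2 c hfc.2.1
        omega
  · -- sl = q ++ [e] nonempty
    rw [List.concat_eq_append] at hsl
    subst hsl
    have hsl_ne : q ++ [e] ≠ [] := by simp
    have he_mem : e ∈ q ++ [e] := by simp
    have he_last : (q ++ [e]).getLast hsl_ne = e := by simp
    have hlastfact : ∀ z ∈ q ++ [e], z = e ∨ Bef σ z e := by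
      intro z hz
      have := pairwise_getLast step2 hsl_ne z hz
      rwa [he_last] at this
    have heσ : e ∈ σ := mzσ e he_mem
    have he_lt_a : e < a := hza e he_mem
    -- find y among b, c with e before y in σ
    have hyexists : Bef σ e b ∨ Bef σ e c := by
      rcases (master σ hnd e b heσ mbσ (by omega)).1 ((hcross e he_mem b (by simp))) with
        ⟨h, -⟩|⟨-, hfb⟩
      · exact Or.inl h
      rcases (master σ hnd e c heσ mcσ (by omega)).1 ((hcross e he_mem c (by simp))) with
        ⟨h, -⟩|⟨-, hfc⟩
      · exact Or.inr h
      exfalso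
      have := hfb.2.2 c hfc.2.1
      omega
    -- package y
    obtain ⟨y, hey, hay, hyb_or⟩ : ∃ y, Bef σ e y ∧ a < y ∧ y ∈ σ := by
      rcases hyexists with h|h
      · exact ⟨b, h, hab, mbσ⟩
      · exact ⟨c, h, by omega, mcσ⟩
    have hsl_y : ∀ z ∈ q ++ [e], Bef σ z y := by
      intro z hz
      rcases hlastfact z hz with rfl|h
      · exact hey
      · exact bef_trans h hey
    -- claim 4 : find w > a before s₁
    have hs₁ : ∃ s₁ rest, q ++ [e] = s₁ :: rest := by
      rcases q with _|⟨s₁, q'⟩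
      · exact ⟨e, [], by simp⟩
      · exact ⟨s₁, q' ++ [e], by simp⟩
    obtain ⟨s₁, rest, hqe⟩ := hs₁
    have hs₁mem : s₁ ∈ q ++ [e] := by rw [hqe]; simp
    have hs₁σ : s₁ ∈ σ := mzσ s₁ hs₁mem
    have hs₁a : s₁ < a := hza s₁ hs₁mem
    obtain ⟨w, hws₁, haw⟩ : ∃ w, Bef σ w s₁ ∧ a < w := by
      rcases (master σ hnd a s₁ maσ hs₁σ (by omega)).1
        (h_a s₁ (List.mem_append_left _ hs₁mem)) with ⟨hbef, hnF⟩|⟨-, hf⟩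
      · by_contra hcon
        push_neg at hcon
        exact hnF ⟨hs₁a, hbef, fun z hz => hcon z hz⟩
      · exact absurd hf.1 (by omega)
    have hwσ : w ∈ σ := hws₁.memx
    have hw_s : ∀ z ∈ q ++ [e], Bef σ w z := by
      intro z hz
      rw [hqe] at hz
      rcases List.mem_cons.1 hz with rfl|hz'
      · exact hws₁
      · have : Bef σ s₁ z := by
          have h2 := step2
          rw [hqe] at h2
          exact (List.pairwise_cons.1 h2).1 z hz'
        exact bef_trans hws₁ this
    have hw_y : Bef σ w y := bef_trans (hw_s e he_mem) hey
    have ha_y : Bef σ a y := bef_trans (step1 e he_mem) hey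
    have hwa_ne : w ≠ a := by omega
    have hzw : ∀ z ∈ q ++ [e], z < w := fun z hz => by have := hza z hz; omega
    rcases bef_total hwσ maσ hwa_ne with hwa|haw2
    · exact ⟨w, a, y, q ++ [e], pairwise_buildB hwa hw_s hw_y step1 ha_y step2 hsl_y,
        Hmid, fun z hz => ⟨hzw z hz, hza z hz, by have := hza z hz; omega⟩,
        by omega, by omega, Ne.symm hw_y.ne, by omega⟩
    · exact ⟨a, w, y, q ++ [e], pairwise_buildB haw2 step1 ha_y hw_s hw_y step2 hsl_y,
        Hmid, fun z hz => ⟨hza z hz, hzw z hz, by have := hza z hz; omega⟩,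
        by omega, by omega, by omega, Ne.symm hw_y.ne⟩

theorem core_back_aux {σ β sl : List ℕ} {u g y anchor : ℕ} (hnd : σ.Nodup)
    (hug : u < g) (huy : u < y)
    (hzu : ∀ z ∈ sl, z < u) (HB : OrdIso β sl)
    (hus : ∀ z ∈ sl, Bef σ u z) (hgs : ∀ z ∈ sl, Bef σ g z)
    (huy' : Bef σ u y) (hgσ : g ∈ σ)
    (hss : sl.Pairwise (Bef σ)) (hsy : ∀ z ∈ sl, Bef σ z y)
    (hanc : anchor ∈ σ)
    (hA1u : u = anchor ∨ Bef σ u anchor) (hA1g : g = anchor ∨ Bef σ g anchor)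
    (hA2 : Bef σ anchor y)
    (hA3 : ∀ z ∈ sl, z = anchor ∨ Bef σ z anchor) :
    OccA (bubble σ) β := by
  have huσ : u ∈ σ := huy'.memx
  have hyσ : y ∈ σ := huy'.memy
  have mzσ : ∀ z ∈ sl, z ∈ σ := fun z hz => (hus z hz).memy
  set P := σ.take (σ.idxOf anchor + 1) with hP
  have hPanc : anchor ∈ P := mem_take_indexOf hanc
  obtain ⟨m, hm⟩ : ∃ m : ℕ, P.maximum = (m : WithBot ℕ) := by
    cases hmo : P.maximum with
    | bot =>
      have hPe : P = [] := List.maximum_eq_bot.1 hmo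
      rw [hPe] at hPanc
      simp at hPanc
    | coe m => exact ⟨m, rfl⟩
  have hmP : m ∈ P := List.maximum_mem hm
  have hmσ : m ∈ σ := List.take_subset _ _ hmP
  have hmle : ∀ z ∈ P, z ≤ m := fun z hz => by
    have := List.le_maximum_of_mem hz hm
    exact_mod_cast this
  have hPin : ∀ z, (z = anchor ∨ Bef σ z anchor) → z ∈ P := by
    rintro z (rfl|hz)
    · exact hPanc
    · exact mem_take_of_bef hz
  have hprefix : ∀ w z, Bef σ w z → (z = anchor ∨ Bef σ z anchor) → w ≤ m := by
    rintro w z hwz HZ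
    rcases HZ with rfl|hz
    · exact hmle w (hPin w (Or.inr hwz))
    · exact hmle w (hPin w (Or.inr (bef_trans hwz hz)))
  have hgm : g ≤ m := hmle g (hPin g hA1g)
  have hum : u < m := by omega
  obtain ⟨M, hM⟩ : ∃ M : ℕ, σ.maximum = (M : WithBot ℕ) := by
    cases hmo : σ.maximum with
    | bot =>
      have hPe : σ = [] := List.maximum_eq_bot.1 hmo
      rw [hPe] at hanc
      simp at hanc
    | coe M => exact ⟨M, rfl⟩
  have hMσ : M ∈ σ := List.maximum_mem hM
  have hMle : ∀ z ∈ σ, z ≤ M := fun z hz => by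
    have := List.le_maximum_of_mem hz hM
    exact_mod_cast this
  have last_bubble : ∀ z ∈ σ, z ≠ M → Bef (bubble σ) z M := by
    intro z hz hne
    have hzM : z < M := lt_of_le_of_ne (hMle z hz) hne
    rcases bef_total hz hMσ hne with h|h
    · exact (master σ hnd z M hz hMσ hne).2 (Or.inl ⟨h, fun hf => by have := hf.1; omega⟩)
    · exact (master σ hnd z M hz hMσ hne).2 (Or.inr ⟨h, ⟨hzM, h, fun w hw => hMle w hw.memx⟩⟩)
  have t_u_s : ∀ z ∈ sl, Bef (bubble σ) u z := by
    intro z hz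
    have hne : u ≠ z := by have := hzu z hz; omega
    exact (master σ hnd u z huσ (mzσ z hz) hne).2
      (Or.inl ⟨hus z hz, fun hf => by have := hf.2.2 g (hgs z hz); omega⟩)
  have t_ss : sl.Pairwise (Bef (bubble σ)) := by
    refine hss.imp_of_mem ?_
    intro z1 z2 hz1 hz2 hb
    exact (master σ hnd z1 z2 (mzσ z1 hz1) (mzσ z2 hz2) hb.ne).2
      (Or.inl ⟨hb, fun hf => by
        have h1 := hf.2.2 g (hgs z2 hz2)
        have h2 := hzu z1 hz1
        omega⟩)
  rcases eq_or_ne m M with heq|hmM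
  · have hyM : y ≠ M := by
      intro hyMe
      rcases bef_or_eq_of_mem_take hnd hanc hmP with h|h
      · exact hA2.ne ((h.symm.trans heq).trans hyMe.symm)
      · rw [heq] at h
        rw [← hyMe] at h
        exact bef_asymm hA2 h
    have hyltM : y < M := lt_of_le_of_ne (hMle y hyσ) hyM
    have t_u_y : Bef (bubble σ) u y := (master σ hnd u y huσ hyσ (by omega)).2
      (Or.inl ⟨huy', fun hf => by have := hf.1; omega⟩)
    have t_s_y : ∀ z ∈ sl, Bef (bubble σ) z y := fun z hz =>
      (master σ hnd z y (mzσ z hz) hyσ (by have := hzu z hz; omega)).2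
        (Or.inl ⟨hsy z hz, fun hf => by have h1 := hf.1; have h2 := hzu z hz; omega⟩)
    exact ⟨u, y, M, sl, pairwise_buildA t_u_s t_u_y (last_bubble u huσ (by omega)) t_s_y
      (fun z hz => last_bubble z (mzσ z hz) (by have := hzu z hz; omega))
      (last_bubble y hyσ hyM) t_ss, HB, hzu, huy, hyltM⟩
  · have hmltM : m < M := lt_of_le_of_ne (hMle m hmσ) hmM
    have t_u_m : Bef (bubble σ) u m := by
      rcases bef_total huσ hmσ (by omega) with h|h
      · exact (master σ hnd u m huσ hmσ (by omega)).2
          (Or.inl ⟨h, fun hf => by have := hf.1; omega⟩)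
      · exact (master σ hnd u m huσ hmσ (by omega)).2
          (Or.inr ⟨h, ⟨hum, h, fun w hw => hprefix w u hw hA1u⟩⟩)
    have t_s_m : ∀ z ∈ sl, Bef (bubble σ) z m := by
      intro z hz
      have hzm : z < m := by have := hzu z hz; omega
      rcases bef_total (mzσ z hz) hmσ (by omega) with h|h
      · exact (master σ hnd z m (mzσ z hz) hmσ (by omega)).2
          (Or.inl ⟨h, fun hf => by have := hf.1; omega⟩)
      · exact (master σ hnd z m (mzσ z hz) hmσ (by omega)).2
          (Or.inr ⟨h, ⟨hzm, h, fun w hw => hprefix w z hw (hA3 z hz)⟩⟩)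
    exact ⟨u, m, M, sl, pairwise_buildA t_u_s t_u_m (last_bubble u huσ (by omega)) t_s_m
      (fun z hz => last_bubble z (mzσ z hz) (by have := hzu z hz; omega))
      (last_bubble m hmσ hmM) t_ss, HB, hzu, hum, hmltM⟩

theorem core_backward {σ β : List ℕ} (hnd : σ.Nodup) (h : Config σ β) : OccA (bubble σ) β := by
  obtain ⟨x₁, x₂, y, sl, hp, HB, hzc, hne12, hminy, hyne1, hyne2⟩ := h
  have h1all := (List.pairwise_cons.1 hp).1
  have hp2 := (List.pairwise_cons.1 hp).2
  have h2all := (List.pairwise_cons.1 hp2).1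
  have hp3 := (List.pairwise_cons.1 hp2).2
  have hss := (List.pairwise_append.1 hp3).1
  have hsy : ∀ z ∈ sl, Bef σ z y := fun z hz =>
    (List.pairwise_append.1 hp3).2.2 z hz y (by simp)
  have h12 : Bef σ x₁ x₂ := h1all x₂ (by simp)
  have h1s : ∀ z ∈ sl, Bef σ x₁ z := fun z hz =>
    h1all z (List.mem_cons_of_mem _ (List.mem_append_left _ hz))
  have h1y : Bef σ x₁ y := h1all y (by simp)
  have h2s : ∀ z ∈ sl, Bef σ x₂ z := fun z hz => h2all z (List.mem_append_left _ hz)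
  have h2y : Bef σ x₂ y := h2all y (by simp)
  rcases List.eq_nil_or_concat sl with rfl|⟨q, e, hsl⟩
  · rcases Nat.lt_or_ge x₁ x₂ with hx|hx
    · exact core_back_aux hnd hx (by omega) (by simp) HB (by simp) (by simp) h1y h12.memy
        List.Pairwise.nil (by simp) h12.memy (Or.inr h12) (Or.inl rfl) h2y (by simp)
    · have hx' : x₂ < x₁ := by omega
      exact core_back_aux hnd hx' (by omega) (by simp) HB (by simp) (by simp) h2y h12.memx
        List.Pairwise.nil (by simp) h12.memy (Or.inl rfl) (Or.inr h12) h2y (by simp)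
  · rw [List.concat_eq_append] at hsl
    subst hsl
    have he_mem : e ∈ q ++ [e] := by simp
    have hA3 : ∀ z ∈ q ++ [e], z = e ∨ Bef σ z e := by
      intro z hz
      rcases List.mem_append.1 hz with h|h
      · exact Or.inr ((List.pairwise_append.1 hss).2.2 z h e (by simp))
      · exact Or.inl (List.mem_singleton.1 h)
    have heσ : e ∈ σ := (h1s e he_mem).memy
    rcases Nat.lt_or_ge x₁ x₂ with hx|hx
    · exact core_back_aux hnd hx (by omega) (fun z hz => (hzc z hz).1) HB h1s h2s h1y h12.memy
        hss hsy heσ (Or.inr (h1s e he_mem)) (Or.inr (h2s e he_mem)) (hsy e he_mem) hA3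
    · have hx' : x₂ < x₁ := by omega
      exact core_back_aux hnd hx' (by omega) (fun z hz => (hzc z hz).2.1) HB h2s h1s h2y h12.memx
        hss hsy heσ (Or.inr (h2s e he_mem)) (Or.inr (h1s e he_mem)) (hsy e he_mem) hA3

theorem four_iff {σ α' : List ℕ} {n : ℕ} (hnd : σ.Nodup) (hn : 3 ≤ n)
    (hα : ∀ x ∈ α', x < n - 2) :
    (PContains ((n - 2) :: (n - 1) :: α' ++ [n]) σ ∨
      PContains ((n - 1) :: (n - 2) :: α' ++ [n]) σ ∨
      PContains ((n - 2) :: n :: α' ++ [n - 1]) σ ∨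
      PContains (n :: (n - 2) :: α' ++ [n - 1]) σ) ↔ Config σ α' := by
  have hβ1 : ∀ z ∈ α', z < n - 2 ∧ z < n - 1 ∧ z < n :=
    fun z hz => by have := hα z hz; omega
  have hβ2 : ∀ z ∈ α', z < n - 1 ∧ z < n - 2 ∧ z < n :=
    fun z hz => by have := hα z hz; omega
  have hβ3 : ∀ z ∈ α', z < n - 2 ∧ z < n ∧ z < n - 1 :=
    fun z hz => by have := hα z hz; omega
  have hβ4 : ∀ z ∈ α', z < n ∧ z < n - 2 ∧ z < n - 1 :=
    fun z hz => by have := hα z hz; omega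
  rw [pcontains_shapeB_iff hnd hβ1, pcontains_shapeB_iff hnd hβ2,
    pcontains_shapeB_iff hnd hβ3, pcontains_shapeB_iff hnd hβ4]
  constructor
  · rintro (⟨x₁, x₂, y, sl, hp, HB, hz, e1, e2, e3, e4, e5, e6⟩ |
      ⟨x₁, x₂, y, sl, hp, HB, hz, e1, e2, e3, e4, e5, e6⟩ |
      ⟨x₁, x₂, y, sl, hp, HB, hz, e1, e2, e3, e4, e5, e6⟩ |
      ⟨x₁, x₂, y, sl, hp, HB, hz, e1, e2, e3, e4, e5, e6⟩) <;>
      exact ⟨x₁, x₂, y, sl, hp, HB, hz, by omega, by omega, by omega, by omega⟩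
  · rintro ⟨x₁, x₂, y, sl, hp, HB, hz, hne, hmin, hy1, hy2⟩
    rcases Nat.lt_or_ge x₁ x₂ with h12|h12
    · rcases Nat.lt_or_ge x₂ y with h2y|h2y
      · exact Or.inl ⟨x₁, x₂, y, sl, hp, HB, hz,
          by omega, by omega, by omega, by omega, by omega, by omega⟩
      · exact Or.inr (Or.inr (Or.inl ⟨x₁, x₂, y, sl, hp, HB, hz,
          by omega, by omega, by omega, by omega, by omega, by omega⟩))
    · rcases Nat.lt_or_ge x₁ y with h1y|h1y
      · exact Or.inr (Or.inl ⟨x₁, x₂, y, sl, hp, HB, hz,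
          by omega, by omega, by omega, by omega, by omega, by omega⟩)
      · exact Or.inr (Or.inr (Or.inr ⟨x₁, x₂, y, sl, hp, HB, hz,
          by omega, by omega, by omega, by omega, by omega, by omega⟩))

end BubblePre

open BubblePre in
/-- For `π = (n-2) α (n-1) n` with exactly three left-to-right maxima,
`B⁻¹(Av(π)) = Av((n-2)(n-1)αn, (n-1)(n-2)αn, (n-2)nα(n-1), n(n-2)α(n-1))`. -/
theorem preimage_three_ltr_max_final_case (n : ℕ) (α : List ℕ)
    (hn : 3 ≤ n)
    (hπ : IsPermList ((n - 2) :: α ++ [n - 1, n]))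
    (hlen : ((n - 2) :: α ++ [n - 1, n]).length = n)
    (hα : ∀ x ∈ α, x < n - 2) :
    ∀ σ : List ℕ, IsPermList σ →
      (Avoids (bubble σ) ((n - 2) :: α ++ [n - 1, n]) ↔
        (Avoids σ ((n - 2) :: (n - 1) :: α ++ [n]) ∧
          Avoids σ ((n - 1) :: (n - 2) :: α ++ [n]) ∧
          Avoids σ ((n - 2) :: n :: α ++ [n - 1]) ∧
          Avoids σ (n :: (n - 2) :: α ++ [n - 1]))) := by
  intro σ hσ
  have hndσ : σ.Nodup := hσ.nodup_iff.2 (List.nodup_range')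
  have hndτ : (bubble σ).Nodup := (bubble_perm σ).nodup_iff.2 hndσ
  have h12 : n - 2 < n - 1 := by omega
  have h23 : n - 1 < n := by omega
  unfold Avoids
  rw [pcontains_shapeA_iff hndτ hα h12 h23]
  have hiff : OccA (bubble σ) α ↔ Config σ α :=
    ⟨core_forward hndσ, core_backward hndσ⟩
  rw [hiff, ← four_iff hndσ hn hα]
  tauto
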